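/- Let S(z) = Σ s_k z^k be the power series with s_0 = 1 satisfying S(z^{16}) = −z S(z) + (1+z+z^2) S(z^4). Then every coefficient s_k belongs to {0, 1}. -/

import Mathlib

/-!
Comparing the coefficients of `z^(n+2)` on both sides of the functional equation gives, for
`s_k = coeff k S`, the recurrences `s(4k) = s(k)`, `s(4k+1) = s(k)`, `s(4k+2) = 0` and
`s(4k+3) = s(k+1) - [4 ∣ k+1] s((k+1)/4)`; by the first one the last reads `s(4k+3) = 0` if
`4 ∣ k+1` and `s(4k+3) = s(k+1)` otherwise. So every `s_k` with `k > 0` is `0` or equal to a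
coefficient of smaller index, and strong induction from `s_0 = 1` finishes.
-/

open PowerSeries

/-- `f(z^d)` as a formal power series. -/
noncomputable def substPow {R : Type*} [Semiring R] (d : ℕ) (f : PowerSeries R) :
    PowerSeries R :=
  PowerSeries.mk fun n => if d ∣ n then PowerSeries.coeff (R := R) (n / d) f else 0

section substPow

variable {R : Type*} [Semiring R]

theorem coeff_substPow (d n : ℕ) (f : R⟦X⟧) :
    coeff n (substPow d f) = if d ∣ n then coeff (n / d) f else 0 :=
  coeff_mk _ _

theorem coeff_substPow_of_not_dvd {d n : ℕ} (f : R⟦X⟧) (h : ¬ d ∣ n) :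
    coeff n (substPow d f) = 0 := by
  rw [coeff_substPow, if_neg h]

theorem coeff_substPow_mul {d : ℕ} (hd : 0 < d) (n : ℕ) (f : R⟦X⟧) :
    coeff (d * n) (substPow d f) = coeff n f := by
  rw [coeff_substPow, if_pos (dvd_mul_right d n), Nat.mul_div_cancel_left n hd]

theorem coeff_mul_substPow_mul {a : ℕ} (ha : 0 < a) (b n : ℕ) (f : R⟦X⟧) :
    coeff (a * n) (substPow (a * b) f) = coeff n (substPow b f) := by
  simp only [coeff_substPow, Nat.mul_dvd_mul_iff_left ha, Nat.mul_div_mul_left n b ha]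

end substPow

namespace DilcherStolarsky

variable {R : Type*} [CommRing R] {S : R⟦X⟧}

def FunctionalEq (S : R⟦X⟧) : Prop :=
  substPow 16 S = -X * S + (1 + X + X ^ 2) * substPow 4 S

theorem FunctionalEq.coeff_add_two (h : FunctionalEq S) (n : ℕ) :
    coeff (n + 2) (substPow 16 S) = -coeff (n + 1) S + coeff (n + 2) (substPow 4 S)
      + coeff (n + 1) (substPow 4 S) + coeff n (substPow 4 S) := by
  rw [h, add_mul, add_mul, one_mul, map_add, map_add, map_add, neg_mul, map_neg,
    coeff_succ_X_mul, coeff_succ_X_mul, pow_two, mul_assoc, coeff_succ_X_mul,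
    coeff_succ_X_mul]
  ring

theorem FunctionalEq.coeff_four_mul_add_one (h : FunctionalEq S) (k : ℕ) :
    coeff (4 * k + 1) S = coeff k S := by
  have := h.coeff_add_two (4 * k)
  simp (disch := omega) only [coeff_substPow_of_not_dvd, coeff_substPow_mul] at this
  linear_combination this

theorem FunctionalEq.coeff_four_mul_add_two (h : FunctionalEq S) (k : ℕ) :
    coeff (4 * k + 2) S = 0 := by
  have := h.coeff_add_two (4 * k + 1)
  simp (disch := omega) only [coeff_substPow_of_not_dvd] at this
  linear_combination this

theorem FunctionalEq.coeff_four_mul (h : FunctionalEq S) (k : ℕ) :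
    coeff (4 * k) S = coeff k S := by
  obtain _ | k := k
  · rfl
  have := h.coeff_add_two (4 * k + 3)
  rw [show 4 * k + 3 + 1 = 4 * (k + 1) by ring] at this
  simp (disch := omega) only [coeff_substPow_of_not_dvd, coeff_substPow_mul] at this
  linear_combination this

theorem FunctionalEq.coeff_substPow_four (h : FunctionalEq S) (n : ℕ) :
    coeff n (substPow 4 S) = if 4 ∣ n then coeff n S else 0 := by
  split_ifs with hn
  · obtain ⟨j, rfl⟩ := hn
    rw [coeff_substPow_mul (by norm_num), h.coeff_four_mul]
  · exact coeff_substPow_of_not_dvd S hn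

theorem FunctionalEq.coeff_four_mul_add_three (h : FunctionalEq S) (k : ℕ) :
    coeff (4 * k + 3) S = if 4 ∣ k + 1 then 0 else coeff (k + 1) S := by
  have := h.coeff_add_two (4 * k + 2)
  rw [show 4 * k + 2 + 2 = 4 * (k + 1) by ring, show (16 : ℕ) = 4 * 4 by rfl,
    coeff_mul_substPow_mul (by norm_num), coeff_substPow_mul (by norm_num)] at this
  simp (disch := omega) only [coeff_substPow_of_not_dvd] at this
  rw [h.coeff_substPow_four] at this
  split_ifs at this ⊢ <;> linear_combination this

theorem FunctionalEq.coeff_eq_zero_or_exists_lt (h : FunctionalEq S) {k : ℕ} (hk : 0 < k) :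
    coeff k S = 0 ∨ ∃ j < k, coeff k S = coeff j S := by
  obtain ⟨q, r, hr, rfl⟩ : ∃ q r, r < 4 ∧ k = 4 * q + r :=
    ⟨k / 4, k % 4, Nat.mod_lt _ (by norm_num), (Nat.div_add_mod k 4).symm⟩
  interval_cases r
  · exact Or.inr ⟨q, by omega, h.coeff_four_mul q⟩
  · exact Or.inr ⟨q, by omega, h.coeff_four_mul_add_one q⟩
  · exact Or.inl (h.coeff_four_mul_add_two q)
  · rw [h.coeff_four_mul_add_three]
    split_ifs
    · exact Or.inl rfl
    · exact Or.inr ⟨q + 1, by omega, rfl⟩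

end DilcherStolarsky

/-- Every coefficient of the Dilcher–Stolarsky series `S`, i.e. the power series
with `S(0) = 1` satisfying `S(z^{16}) = −z S(z) + (1+z+z^2) S(z^4)`, lies in `{0,1}`. -/
theorem dilcherStolarsky_coefficients_zero_one
    (S : PowerSeries ℤ) (h0 : PowerSeries.coeff (R := ℤ) 0 S = 1)
    (hfe : substPow 16 S =
      -PowerSeries.X * S + (1 + PowerSeries.X + PowerSeries.X ^ 2) * substPow 4 S) :
    ∀ k : ℕ, PowerSeries.coeff (R := ℤ) k S = 0 ∨ PowerSeries.coeff (R := ℤ) k S = 1 := by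
  have hS : DilcherStolarsky.FunctionalEq S := hfe
  intro k
  induction k using Nat.strong_induction_on with
  | _ k ih =>
    rcases k.eq_zero_or_pos with rfl | hk
    · exact Or.inr h0
    rcases hS.coeff_eq_zero_or_exists_lt hk with hzero | ⟨j, hjk, hj⟩
    · exact Or.inl hzero
    · rw [hj]
      exact ih j hjk
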